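/- arXiv:2501.04291 — 3 statements merged into one kernel-verified Lean document; each statement's English description precedes it below -/
import Mathlib

section
/- Let f₁, f₂ : ℝⁿ → ℝ be convex functions and f = f₁ − f₂. Let x* ∈ ℝⁿ be a global minimizer of f with f* = f(x*), let ε̄ ≥ 0, and let x̄ ∈ ℝⁿ satisfy (f(x̄) − f*)/(|f*| + 1) ≤ ε̄ (i.e., x̄ is an ε̄-approximate global minimizer). Then, with ε̂ = ε̄(|f*| + 1), for every ε ≥ 0 one has ∂_ε f₂(x̄) ⊆ ∂_{ε+ε̂} f₁(x̄). -/
open scoped RealInnerProductSpace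

/-- The ε-subdifferential of `g` at `x`. -/
def epsSubdiff {n : ℕ} (g : EuclideanSpace ℝ (Fin n) → ℝ) (ε : ℝ)
    (x : EuclideanSpace ℝ (Fin n)) : Set (EuclideanSpace ℝ (Fin n)) :=
  {ξ | ∀ y, g y ≥ g x + ⟪ξ, y - x⟫ - ε}

/-- The subdifferential of `g` at `x`. -/
def subdiff {n : ℕ} (g : EuclideanSpace ℝ (Fin n) → ℝ)
    (x : EuclideanSpace ℝ (Fin n)) : Set (EuclideanSpace ℝ (Fin n)) :=
  {ξ | ∀ y, g y ≥ g x + ⟪ξ, y - x⟫}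

/-- The t-spherical subdifferential of `g` at `x`. -/
def sphSubdiff {n : ℕ} (g : EuclideanSpace ℝ (Fin n) → ℝ) (t : ℝ)
    (x : EuclideanSpace ℝ (Fin n)) : Set (EuclideanSpace ℝ (Fin n)) :=
  convexHull ℝ {ξ | ∃ d : EuclideanSpace ℝ (Fin n), ‖d‖ = 1 ∧ ξ ∈ subdiff g (x + t • d)}

theorem epsSubdiff_subset_of_forall_sub_le {n : ℕ} {f₁ f₂ : EuclideanSpace ℝ (Fin n) → ℝ}
    {x : EuclideanSpace ℝ (Fin n)} {δ : ℝ} (hmin : ∀ y, f₁ x - f₂ x - δ ≤ f₁ y - f₂ y) (ε : ℝ) :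
    epsSubdiff f₂ ε x ⊆ epsSubdiff f₁ (ε + δ) x := by
  intro ξ hξ y
  have h₂ : f₂ y ≥ f₂ x + ⟪ξ, y - x⟫ - ε := hξ y
  have h₁₂ := hmin y
  show f₁ y ≥ f₁ x + ⟪ξ, y - x⟫ - (ε + δ)
  linarith

theorem eps_subdiff_inclusion_at_approx_global_min_general {n : ℕ}
    (f₁ f₂ f : EuclideanSpace ℝ (Fin n) → ℝ)
    (hf : ∀ x, f x = f₁ x - f₂ x)
    (xstar xbar : EuclideanSpace ℝ (Fin n))
    (hglob : ∀ x, f xstar ≤ f x)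
    (fstar : ℝ) (hfstar : fstar = f xstar)
    (εbar : ℝ)
    (happrox : (f xbar - fstar) / (|fstar| + 1) ≤ εbar)
    (εhat : ℝ) (hεhat : εhat = εbar * (|fstar| + 1)) :
    ∀ ε : ℝ, 0 ≤ ε → epsSubdiff f₂ ε xbar ⊆ epsSubdiff f₁ (ε + εhat) xbar := by
  intro ε _
  have hbar : f xbar - fstar ≤ εhat :=
    hεhat ▸ (div_le_iff₀ (by positivity)).mp happrox
  refine epsSubdiff_subset_of_forall_sub_le (fun y => ?_) ε
  have hy : fstar ≤ f y := hfstar ▸ hglob y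
  rw [← hf, ← hf]
  linarith

theorem eps_subdiff_inclusion_at_approx_global_min {n : ℕ}
    (f₁ f₂ f : EuclideanSpace ℝ (Fin n) → ℝ)
    (h₁ : ConvexOn ℝ Set.univ f₁) (h₂ : ConvexOn ℝ Set.univ f₂)
    (hf : ∀ x, f x = f₁ x - f₂ x)
    (xstar xbar : EuclideanSpace ℝ (Fin n))
    (hglob : ∀ x, f xstar ≤ f x)
    (fstar : ℝ) (hfstar : fstar = f xstar)
    (εbar : ℝ) (hεbar : 0 ≤ εbar)
    (happrox : (f xbar - fstar) / (|fstar| + 1) ≤ εbar)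
    (εhat : ℝ) (hεhat : εhat = εbar * (|fstar| + 1)) :
    ∀ ε : ℝ, 0 ≤ ε → epsSubdiff f₂ ε xbar ⊆ epsSubdiff f₁ (ε + εhat) xbar :=
  eps_subdiff_inclusion_at_approx_global_min_general f₁ f₂ f hf xstar xbar hglob fstar hfstar εbar
    happrox εhat hεhat
end

section
/- Let f : ℝⁿ → ℝ be a convex function, x ∈ ℝⁿ and δ > 0. Then the set convexHull ℝ (⋃_{y ∈ closedBall(x, δ)} ∂f(y)) is convex and compact. (With δ = ρ/(2L), L a Lipschitz constant of f at x, this set is the normalized Goldstein ρ-subdifferential G_ρ f(x).) -/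
/-!
By Carathéodory's theorem every point of the convex hull of `s` in a space of dimension `d` is a
convex combination of `d + 1` points of `s`, so the convex hull of a compact set is a continuous
image of `stdSimplex × sᵈ⁺¹`, hence compact. The subgradients of a continuous function over a
compact set `K` form a compact set: a subgradient `ξ` at `y` satisfies
`‖ξ‖ = ⟪ξ, ‖ξ‖⁻¹ • ξ⟫ ≤ f (y + ‖ξ‖⁻¹ • ξ) - f y`, which is bounded for `y ∈ K`, and the graph of
the subdifferential is closed, so these subgradients are the projection of a compact set.
-/

open scoped RealInnerProductSpace

section ConvexHull

variable {E : Type*} [AddCommGroup E] [Module ℝ E] [FiniteDimensional ℝ E]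

theorem exists_fin_finrank_succ_of_mem_convexHull {s : Set E} {x : E}
    (hx : x ∈ convexHull ℝ s) :
    ∃ w ∈ stdSimplex ℝ (Fin (Module.finrank ℝ E + 1)),
      ∃ z : Fin (Module.finrank ℝ E + 1) → E, (∀ i, z i ∈ s) ∧ ∑ i, w i • z i = x := by
  obtain ⟨z₀, hz₀⟩ := convexHull_nonempty_iff.mp ⟨x, hx⟩
  obtain ⟨ι, _, z, w, hzs, hind, hw₀, hw₁, rfl⟩ := eq_pos_convex_span_of_mem_convexHull hx
  set N := Module.finrank ℝ E + 1
  have hcard : Fintype.card ι ≤ Fintype.card (Fin N) := by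
    simpa using hind.card_le_finrank_succ.trans
      (Nat.succ_le_succ (Submodule.finrank_le _))
  obtain ⟨e⟩ := Function.Embedding.nonempty_of_card_le hcard
  refine ⟨Function.extend e w 0, ⟨fun j => ?_, ?_⟩, Function.extend e z fun _ => z₀,
    fun j => ?_, ?_⟩
  · by_cases hj : ∃ i, e i = j
    · obtain ⟨i, rfl⟩ := hj
      simpa [e.injective.extend_apply] using (hw₀ i).le
    · simp [Function.extend_apply' _ _ _ hj]
  · rw [← hw₁]
    refine (Fintype.sum_of_injective e e.injective _ _ (fun j hj => ?_) fun i => ?_).symm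
    · simp [Function.extend_apply' _ _ _ hj]
    · simp [e.injective.extend_apply]
  · by_cases hj : ∃ i, e i = j
    · obtain ⟨i, rfl⟩ := hj
      simpa [e.injective.extend_apply] using hzs (Set.mem_range_self i)
    · simpa [Function.extend_apply' _ _ _ hj] using hz₀
  · refine (Fintype.sum_of_injective e e.injective _ _ (fun j hj => ?_) fun i => ?_).symm
    · simp [Function.extend_apply' _ _ _ hj]
    · simp [e.injective.extend_apply]

variable [TopologicalSpace E] [IsTopologicalAddGroup E] [ContinuousSMul ℝ E]

theorem IsCompact.convexHull {s : Set E} (hs : IsCompact s) :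
    IsCompact (_root_.convexHull ℝ s) := by
  set N := Module.finrank ℝ E + 1
  have himage : _root_.convexHull ℝ s =
      (fun p : (Fin N → ℝ) × (Fin N → E) => ∑ i, p.1 i • p.2 i) '' (stdSimplex ℝ (Fin N) ×ˢ
        Set.univ.pi fun _ => s) := by
    refine Set.Subset.antisymm (fun x hx => ?_) ?_
    · obtain ⟨w, hw, z, hzs, rfl⟩ := exists_fin_finrank_succ_of_mem_convexHull hx
      exact ⟨(w, z), ⟨hw, fun i _ => hzs i⟩, rfl⟩
    · rintro _ ⟨⟨w, z⟩, ⟨⟨hw₀, hw₁⟩, hzs⟩, rfl⟩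
      exact mem_convexHull_of_exists_fintype w z hw₀ hw₁ (fun i => hzs i trivial) rfl
  rw [himage]
  exact ((isCompact_stdSimplex ℝ _).prod (isCompact_univ_pi fun _ => hs)).image (by fun_prop)

end ConvexHull

section Subdiff

variable {n : ℕ} {f : EuclideanSpace ℝ (Fin n) → ℝ}

theorem norm_le_of_mem_subdiff {y ξ : EuclideanSpace ℝ (Fin n)} (hξ : ξ ∈ subdiff f y) {M : ℝ}
    (hM : ∀ z ∈ Metric.closedBall y 1, f z ≤ M) : ‖ξ‖ ≤ M - f y := by
  have hunit : ‖‖ξ‖⁻¹ • ξ‖ ≤ 1 := by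
    rw [norm_smul, norm_inv, norm_norm]
    exact inv_mul_le_one_of_le₀ le_rfl (norm_nonneg ξ)
  have hinner : ⟪ξ, ‖ξ‖⁻¹ • ξ⟫ = ‖ξ‖ := by
    rw [real_inner_smul_right, real_inner_self_eq_norm_sq, sq, ← mul_assoc, inv_mul_mul_self]
  have hz := hξ (y + ‖ξ‖⁻¹ • ξ)
  rw [add_sub_cancel_left, hinner] at hz
  have := hM (y + ‖ξ‖⁻¹ • ξ) (by simpa [dist_eq_norm] using hunit)
  linarith

theorem isClosed_setOf_mem_subdiff (hf : Continuous f) :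
    IsClosed {p : EuclideanSpace ℝ (Fin n) × EuclideanSpace ℝ (Fin n) | p.2 ∈ subdiff f p.1} := by
  have hgraph : {p : EuclideanSpace ℝ (Fin n) × EuclideanSpace ℝ (Fin n) | p.2 ∈ subdiff f p.1} =
      ⋂ z, {p | f p.1 + ⟪p.2, z - p.1⟫ ≤ f z} := by
    ext p
    simp [subdiff]
  rw [hgraph]
  exact isClosed_iInter fun z => isClosed_le (by fun_prop) (by fun_prop)

theorem IsCompact.biUnion_subdiff (hf : Continuous f) {K : Set (EuclideanSpace ℝ (Fin n))}
    (hK : IsCompact K) : IsCompact (⋃ y ∈ K, subdiff f y) := by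
  obtain ⟨C, hC⟩ := (hK.cthickening (r := 1)).exists_bound_of_continuousOn hf.continuousOn
  have hbound : ∀ y ∈ K, ∀ ξ ∈ subdiff f y, ‖ξ‖ ≤ C + C := by
    intro y hy ξ hξ
    have hM : ∀ z ∈ Metric.closedBall y 1, f z ≤ C := fun z hz =>
      le_of_abs_le (hC z (Metric.closedBall_subset_cthickening hy 1 hz))
    have hfy : -C ≤ f y := neg_le_of_abs_le (hC y (Metric.self_subset_cthickening K hy))
    linarith [norm_le_of_mem_subdiff hξ hM]
  have hproj : (⋃ y ∈ K, subdiff f y) = Prod.snd ''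
      ((K ×ˢ Metric.closedBall 0 (C + C)) ∩ {p | p.2 ∈ subdiff f p.1}) := by
    ext ξ
    simp only [Set.mem_iUnion₂, Set.mem_image, Set.mem_inter_iff, Set.mem_prod,
      Metric.mem_closedBall, dist_zero_right, Set.mem_ofPred_eq, Prod.exists, exists_eq_right]
    exact ⟨fun ⟨y, hy, hξ⟩ => ⟨y, ⟨hy, hbound y hy ξ hξ⟩, hξ⟩, fun ⟨y, ⟨hy, _⟩, hξ⟩ => ⟨y, hy, hξ⟩⟩
  rw [hproj]
  exact ((hK.prod (isCompact_closedBall 0 _)).inter_right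
    (isClosed_setOf_mem_subdiff hf)).image continuous_snd

end Subdiff

theorem goldstein_convex_compact_general {n : ℕ}
    (f : EuclideanSpace ℝ (Fin n) → ℝ) (hf : ConvexOn ℝ Set.univ f)
    (x : EuclideanSpace ℝ (Fin n)) (δ : ℝ) :
    Convex ℝ (convexHull ℝ (⋃ y ∈ Metric.closedBall x δ, subdiff f y)) ∧
    IsCompact (convexHull ℝ (⋃ y ∈ Metric.closedBall x δ, subdiff f y)) := by
  have hcont : Continuous f := continuousOn_univ.mp (hf.continuousOn isOpen_univ)
  exact ⟨convex_convexHull ℝ _, ((isCompact_closedBall x δ).biUnion_subdiff hcont).convexHull⟩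

theorem goldstein_convex_compact {n : ℕ}
    (f : EuclideanSpace ℝ (Fin n) → ℝ) (hf : ConvexOn ℝ Set.univ f)
    (x : EuclideanSpace ℝ (Fin n)) (δ : ℝ) (hδ : 0 < δ) :
    Convex ℝ (convexHull ℝ (⋃ y ∈ Metric.closedBall x δ, subdiff f y)) ∧
    IsCompact (convexHull ℝ (⋃ y ∈ Metric.closedBall x δ, subdiff f y)) :=
  goldstein_convex_compact_general f hf x δ
end

section
/- Let f : ℝⁿ → ℝ be a convex function, x ∈ ℝⁿ and δ > 0. Then there exists ε ≥ 0 such that convexHull ℝ (⋃_{y ∈ closedBall(x, δ)} ∂f(y)) ⊆ ∂_ε f(x). (With δ = ρ/(2L), L a Lipschitz constant of f at x, the left-hand side is the normalized Goldstein ρ-subdifferential G_ρ f(x).) -/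
/-!
A subgradient `ξ` of `f` at `y` is an `ε`-subgradient at `x` as soon as `ε` dominates the
linearization error `f x - f y - ⟪ξ, x - y⟫`. Testing the subgradient inequality at the reflected
point `y + (y - x)` bounds this error by `f x + f (y + (y - x)) - 2 f y`, which for `y ∈ closedBall x δ` only
involves values of `f` on `closedBall x (2δ)`, where the convex (hence continuous) `f` is bounded.
Since `ε`-subdifferentials are convex, the bound passes to the convex hull.
-/

open scoped RealInnerProductSpace

variable {n : ℕ}

lemma convex_epsSubdiff (g : EuclideanSpace ℝ (Fin n) → ℝ) (ε : ℝ)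
    (x : EuclideanSpace ℝ (Fin n)) : Convex ℝ (epsSubdiff g ε x) := by
  intro ξ hξ η hη a b ha hb hab y
  have hinner : ⟪a • ξ + b • η, y - x⟫ = a * ⟪ξ, y - x⟫ + b * ⟪η, y - x⟫ := by
    rw [inner_add_left, real_inner_smul_left, real_inner_smul_left]
  rw [ge_iff_le, hinner]
  obtain rfl : b = 1 - a := by linarith
  nlinarith [hξ y, hη y]

lemma epsSubdiff_mono (g : EuclideanSpace ℝ (Fin n) → ℝ) {ε ε' : ℝ} (h : ε ≤ ε')
    (x : EuclideanSpace ℝ (Fin n)) : epsSubdiff g ε x ⊆ epsSubdiff g ε' x :=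
  fun _ hξ y => (hξ y).trans' (by linarith)

lemma mem_epsSubdiff_of_mem_subdiff {g : EuclideanSpace ℝ (Fin n) → ℝ}
    {x y ξ : EuclideanSpace ℝ (Fin n)} (hξ : ξ ∈ subdiff g y) :
    ξ ∈ epsSubdiff g (g x + g (y + (y - x)) - 2 * g y) x := by
  intro z
  have hz := hξ z
  have hreflect := hξ (y + (y - x))
  rw [add_sub_cancel_left] at hreflect
  rw [show z - y = (z - x) - (y - x) by abel, inner_sub_right] at hz
  linarith

lemma add_sub_mem_closedBall_two_mul {x y : EuclideanSpace ℝ (Fin n)} {δ : ℝ}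
    (hy : y ∈ Metric.closedBall x δ) : y + (y - x) ∈ Metric.closedBall x (2 * δ) := by
  rw [Metric.mem_closedBall, dist_eq_norm] at hy ⊢
  rw [add_sub_right_comm]
  linarith [norm_add_le (y - x) (y - x)]

theorem goldstein_subset_eps_subdiff {n : ℕ}
    (f : EuclideanSpace ℝ (Fin n) → ℝ) (hf : ConvexOn ℝ Set.univ f)
    (x : EuclideanSpace ℝ (Fin n)) (δ : ℝ) (hδ : 0 < δ) :
    ∃ ε : ℝ, 0 ≤ ε ∧
      convexHull ℝ (⋃ y ∈ Metric.closedBall x δ, subdiff f y) ⊆ epsSubdiff f ε x := by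
  obtain ⟨C, hC⟩ := (isCompact_closedBall x (2 * δ)).exists_bound_of_continuousOn
    ((hf.continuousOn isOpen_univ).mono (Set.subset_univ _))
  have hbound : ∀ z ∈ Metric.closedBall x (2 * δ), |f z| ≤ C := hC
  have hx : x ∈ Metric.closedBall x (2 * δ) := Metric.mem_closedBall_self (by linarith)
  refine ⟨4 * C, by linarith [abs_nonneg (f x), hbound x hx], ?_⟩
  refine convexHull_min ?_ (convex_epsSubdiff f _ x)
  simp only [Set.iUnion_subset_iff]
  intro y hy ξ hξ
  have hy2 : y ∈ Metric.closedBall x (2 * δ) :=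
    Metric.closedBall_subset_closedBall (by linarith) hy
  refine epsSubdiff_mono f ?_ x (mem_epsSubdiff_of_mem_subdiff hξ)
  have hreflect := hbound _ (add_sub_mem_closedBall_two_mul hy)
  linarith [abs_le.mp (hbound x hx), abs_le.mp (hbound y hy2), abs_le.mp hreflect]
end
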